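/- arXiv:2108.12927 — 6 statements merged into one kernel-verified Lean document; each statement's English description precedes it below -/
import Mathlib

section
/- Let n ≥ 2 and π₁, π₂ the adjacent-swap permutations of {1,…,n} at odd (resp. even) positions. Define the odd j-th composition π_o^j to be the alternating composition of j factors ending with π₁ applied first (i.e. π_o^j = (π₂∘π₁)^{j/2} for even j and π_o^j = π₁∘(π₂∘π₁)^{(j−1)/2} for odd j). Then for every odd i with 1 ≤ i < n and j = n − i, one has π_o^j(i) = n and π_o^{j+1}(i) = n. -/
/-- The permutation of `{1,…,n}` that swaps `i` and `i+1` for every odd `i`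
with `i+1 ≤ n`, and fixes all other elements. -/
def pi1 (n i : ℕ) : ℕ :=
  if Odd i ∧ i + 1 ≤ n then i + 1
  else if Even i ∧ 2 ≤ i ∧ i ≤ n then i - 1
  else i

/-- The permutation of `{1,…,n}` that swaps `i` and `i+1` for every even `i`
with `i+1 ≤ n`, and fixes all other elements. -/
def pi2 (n i : ℕ) : ℕ :=
  if Even i ∧ 2 ≤ i ∧ i + 1 ≤ n then i + 1
  else if Odd i ∧ 3 ≤ i ∧ i ≤ n then i - 1
  else i

/-- The odd `j`-th composition: the alternating composition of `j` factors of
`π₁, π₂, π₁, …`, with `π₁` applied first. -/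
def pio (n : ℕ) : ℕ → ℕ → ℕ
  | 0 => id
  | j + 1 => (if Even j then pi1 n else pi2 n) ∘ pio n j

/-- The even `j`-th composition: the alternating composition of `j` factors of
`π₂, π₁, π₂, …`, with `π₂` applied first. -/
def pie (n : ℕ) : ℕ → ℕ → ℕ
  | 0 => id
  | j + 1 => (if Even j then pi2 n else pi1 n) ∘ pie n j

theorem pio_forwards (n : ℕ) (hn : 2 ≤ n) (i : ℕ) (hi1 : 1 ≤ i) (hin : i < n)
    (hodd : Odd i) :
    pio n (n - i) i = n ∧ pio n (n - i + 1) i = n := by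
  have key : ∀ j, i + j ≤ n → pio n j i = i + j := by
    intro j
    induction j with
    | zero => intro _; simp [pio]
    | succ j ih =>
      intro hj
      have hj' : i + j ≤ n := by omega
      have hij : pio n j i = i + j := ih hj'
      simp only [pio, Function.comp_apply, hij]
      by_cases hje : Even j
      · have hodd' : Odd (i + j) := hodd.add_even hje
        simp only [if_pos hje, pi1]
        rw [if_pos (show Odd (i+j) ∧ i+j+1 ≤ n from ⟨hodd', by omega⟩)]; omega
      · have hjo : Odd j := Nat.not_even_iff_odd.mp hje
        have heven : Even (i + j) := hodd.add_odd hjo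
        have hjo1 : 1 ≤ j := hjo.pos
        simp only [if_neg hje, pi2]
        rw [if_pos (show Even (i+j) ∧ 2 ≤ i+j ∧ i+j+1 ≤ n from ⟨heven, by omega, by omega⟩)]; omega
  have h1 : pio n (n - i) i = n := by
    rw [key (n - i) (by omega)]; omega
  refine ⟨h1, ?_⟩
  simp only [pio, Function.comp_apply, h1]
  by_cases hje : Even (n - i)
  · have hno : Odd n := by
      rcases hodd with ⟨k, hk⟩
      rcases hje with ⟨m, hm⟩
      exact ⟨k + m, by omega⟩
    have hne : ¬ Even n := Nat.not_even_iff_odd.mpr hno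
    simp only [if_pos hje, pi1]
    rw [if_neg (by omega), if_neg (by tauto)]
  · have hjo : Odd (n - i) := Nat.not_even_iff_odd.mp hje
    have hne : Even n := by
      rcases hodd with ⟨k, hk⟩
      rcases hjo with ⟨m, hm⟩
      exact ⟨k + m + 1, by omega⟩
    have hno : ¬ Odd n := by simp [Nat.not_even_iff_odd, hne]
    simp only [if_neg hje, pi2]
    rw [if_neg (by omega), if_neg (by tauto)]
end

section
/- Let n ≥ 2 and π₁, π₂ the adjacent-swap permutations of {1,…,n} at odd (resp. even) positions. Define the even j-th composition π_e^j to be the alternating composition of j factors applied with π₂ first (i.e. π_e^j = (π₁∘π₂)^{j/2} for even j and π_e^j = π₂∘(π₁∘π₂)^{(j−1)/2} for odd j). Then for every odd i with 1 < i ≤ n and j = i − 1, one has π_e^j(i) = 1 and π_e^{j+1}(i) = 1. -/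
lemma pie_aux (n i : ℕ) (hin : i ≤ n) (hodd : i % 2 = 1) :
    ∀ k, k ≤ i - 1 → pie n k i = i - k := by
  intro k
  induction k with
  | zero => intro _; rfl
  | succ k ih =>
    intro hk
    have hik : pie n k i = i - k := ih (by omega)
    show ((if Even k then pi2 n else pi1 n) ∘ pie n k) i = i - (k + 1)
    simp only [Function.comp_apply, hik]
    rcases Nat.even_or_odd k with he | ho
    · rw [if_pos he]
      have hk0 := Nat.even_iff.mp he
      have h1 : ¬ (Even (i - k) ∧ 2 ≤ i - k ∧ i - k + 1 ≤ n) := by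
        rintro ⟨h, -, -⟩; rw [Nat.even_iff] at h; omega
      have h2 : Odd (i - k) ∧ 3 ≤ i - k ∧ i - k ≤ n := by
        refine ⟨Nat.odd_iff.mpr (by omega), by omega, by omega⟩
      rw [pi2, if_neg h1, if_pos h2]; omega
    · rw [if_neg (Nat.not_even_iff_odd.mpr ho)]
      have hk0 := Nat.odd_iff.mp ho
      have h1 : ¬ (Odd (i - k) ∧ i - k + 1 ≤ n) := by
        rintro ⟨h, -⟩; rw [Nat.odd_iff] at h; omega
      have h2 : Even (i - k) ∧ 2 ≤ i - k ∧ i - k ≤ n := by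
        refine ⟨Nat.even_iff.mpr (by omega), by omega, by omega⟩
      rw [pi1, if_neg h1, if_pos h2]; omega

theorem pie_backwards (n : ℕ) (hn : 2 ≤ n) (i : ℕ) (hi1 : 1 < i) (hin : i ≤ n)
    (hodd : Odd i) :
    pie n (i - 1) i = 1 ∧ pie n (i - 1 + 1) i = 1 := by
  have hm := Nat.odd_iff.mp hodd
  have h1 : pie n (i - 1) i = 1 := by
    have := pie_aux n i hin hm (i - 1) le_rfl
    omega
  refine ⟨h1, ?_⟩
  show ((if Even (i - 1) then pi2 n else pi1 n) ∘ pie n (i - 1)) i = 1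
  have he : Even (i - 1) := Nat.even_iff.mpr (by omega)
  simp only [Function.comp_apply, h1, if_pos he]
  rw [pi2]
  norm_num
end

section
/- Let n ≥ 1 and π₁, π₂ the adjacent-swap permutations of {1,…,n} at odd (resp. even) positions. Then the alternating composition of n of these permutations starting with π₁ (the odd n-th composition π_o^n) reverses the order of the elements: π_o^n(i) = n + 1 − i for all 1 ≤ i ≤ n. -/
lemma pio_formula (n : ℕ) (i : ℕ) (h1 : 1 ≤ i) (h2 : i ≤ n) :
    ∀ k, k ≤ n → pio n k i =
      if i % 2 = 1 then (if i + k ≤ n then i + k else 2*n+1-i-k)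
      else (if k < i then i - k else k - i + 1) := by
  intro k
  induction k with
  | zero => intro _; simp [pio]; split_ifs <;> omega
  | succ k ih =>
    intro hk
    have hih := ih (by omega)
    rw [pio]
    simp only [Function.comp_apply]
    rw [hih]
    by_cases hke : Even k
    · rw [if_pos hke]
      have hk2 : k % 2 = 0 := Nat.even_iff.mp hke
      unfold pi1
      simp only [Nat.odd_iff, Nat.even_iff]
      split_ifs <;> omega
    · rw [if_neg hke]
      have hk2 : k % 2 = 1 := Nat.odd_iff.mp (Nat.not_even_iff_odd.mp hke)
      unfold pi2
      simp only [Nat.odd_iff, Nat.even_iff]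
      split_ifs <;> omega

theorem pio_n_reverses (n : ℕ) (hn : 1 ≤ n) :
    ∀ i, 1 ≤ i → i ≤ n → pio n n i = n + 1 - i := by
  intro i h1 h2
  rw [pio_formula n i h1 h2 n le_rfl]
  split_ifs <;> omega
end

section
/- Let n ≥ 1 and π₁, π₂ the adjacent-swap permutations of {1,…,n} at odd (resp. even) positions. Then the alternating composition of n of these permutations starting with π₂ (the even n-th composition π_e^n) reverses the order: π_e^n(i) = n + 1 − i for all 1 ≤ i ≤ n. -/
lemma pie_formula (n : ℕ) : ∀ j, j ≤ n → ∀ i, 1 ≤ i → i ≤ n →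
    pie n j i = if i % 2 = 1 then (if j + 1 ≤ i then i - j else j + 1 - i)
      else (if i + j ≤ n then i + j else 2 * n + 1 - i - j) := by
  intro j
  induction j with
  | zero =>
    intro _ i h1 h2
    simp only [pie, id]
    split_ifs <;> omega
  | succ j ih =>
    intro hj i h1 h2
    have hj' : j ≤ n := by omega
    simp only [pie, Function.comp_apply]
    rw [ih hj' i h1 h2]
    rcases Nat.even_or_odd j with he | ho
    · have hjm : j % 2 = 0 := Nat.even_iff.mp he
      rw [if_pos he]
      unfold pi2
      simp only [Nat.even_iff, Nat.odd_iff]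
      split_ifs <;> omega
    · have hjm : j % 2 = 1 := Nat.odd_iff.mp ho
      rw [if_neg (by simpa [Nat.even_iff] using hjm)]
      unfold pi1
      simp only [Nat.even_iff, Nat.odd_iff]
      split_ifs <;> omega

theorem pie_n_reverses (n : ℕ) (hn : 1 ≤ n) :
    ∀ i, 1 ≤ i → i ≤ n → pie n n i = n + 1 - i := by
  intro i h1 h2
  rw [pie_formula n n le_rfl i h1 h2]
  split_ifs <;> omega
end

section
/- Let n ≥ 1, π₁, π₂ the adjacent-swap permutations of {1,…,n} at odd (resp. even) positions, and π_o^j the odd j-th alternating composition (π₁ applied first). Then for every x ∈ {1,…,n} there exists a unique integer i with 0 ≤ i < n such that π_o^i(x) = π_o^{i+1}(x). -/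
lemma step_up (n j y : ℕ) (h1 : 1 ≤ y) (h2 : y < n) (hp : (y + j) % 2 = 1) :
    (if Even j then pi1 n else pi2 n) y = y + 1 := by
  rcases Nat.even_or_odd j with hj | hj
  · have hj2 := Nat.even_iff.1 hj
    rw [if_pos hj, pi1, if_pos ⟨Nat.odd_iff.2 (by omega), by omega⟩]
  · have hj2 := Nat.odd_iff.1 hj
    rw [if_neg (by simpa using hj), pi2,
      if_pos ⟨Nat.even_iff.2 (by omega), by omega, by omega⟩]

lemma step_down (n j y : ℕ) (h1 : 2 ≤ y) (h2 : y ≤ n) (hp : (y + j) % 2 = 0) :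
    (if Even j then pi1 n else pi2 n) y = y - 1 := by
  rcases Nat.even_or_odd j with hj | hj
  · have hj2 := Nat.even_iff.1 hj
    rw [if_pos hj, pi1, if_neg (by rintro ⟨h, -⟩; have := Nat.odd_iff.1 h; omega),
      if_pos ⟨Nat.even_iff.2 (by omega), by omega, by omega⟩]
  · have hj2 := Nat.odd_iff.1 hj
    rw [if_neg (by simpa using hj), pi2,
      if_neg (by rintro ⟨h, -⟩; have := Nat.even_iff.1 h; omega),
      if_pos ⟨Nat.odd_iff.2 (by omega), by omega, by omega⟩]

lemma step_top (n j : ℕ) (hp : (n + j) % 2 = 1) :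
    (if Even j then pi1 n else pi2 n) n = n := by
  rcases Nat.even_or_odd j with hj | hj
  · have hj2 := Nat.even_iff.1 hj
    rw [if_pos hj, pi1, if_neg (by rintro ⟨-, h⟩; omega),
      if_neg (by rintro ⟨h, -⟩; have := Nat.even_iff.1 h; omega)]
  · have hj2 := Nat.odd_iff.1 hj
    rw [if_neg (by simpa using hj), pi2, if_neg (by rintro ⟨-, -, h⟩; omega),
      if_neg (by rintro ⟨h, -⟩; have := Nat.odd_iff.1 h; omega)]

lemma step_bot (n j : ℕ) (hj : ¬ Even j) :
    (if Even j then pi1 n else pi2 n) 1 = 1 := by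
  rw [if_neg hj, pi2, if_neg (by rintro ⟨h, -⟩; exact (by decide : ¬ Even 1) h),
    if_neg (by rintro ⟨-, h, -⟩; omega)]

lemma traj_up (n x : ℕ) (hx1 : 1 ≤ x) (hxn : x ≤ n) (hx : x % 2 = 1) :
    ∀ j, j ≤ n - x → pio n j x = x + j := by
  intro j
  induction j with
  | zero => intro _; rfl
  | succ j ih =>
    intro hj
    show (if Even j then pi1 n else pi2 n) (pio n j x) = x + (j + 1)
    rw [ih (by omega), step_up n j (x + j) (by omega) (by omega) (by omega)]
    omega

lemma traj_top (n x : ℕ) (hx1 : 1 ≤ x) (hxn : x ≤ n) (hx : x % 2 = 1) :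
    pio n (n - x + 1) x = n := by
  show (if Even (n - x) then pi1 n else pi2 n) (pio n (n - x) x) = n
  rw [traj_up n x hx1 hxn hx (n - x) le_rfl, show x + (n - x) = n by omega,
    step_top n (n - x) (by omega)]

lemma traj_down (n x : ℕ) (hx1 : 1 ≤ x) (hxn : x ≤ n) (hx : x % 2 = 1) :
    ∀ j, n - x + 1 ≤ j → j ≤ 2 * n - x → pio n j x = 2 * n - x + 1 - j := by
  intro j
  induction j with
  | zero => omega
  | succ j ih =>
    intro hj1 hj2
    rcases Nat.lt_or_ge j (n - x + 1) with h | h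
    · have h1 : j + 1 = n - x + 1 := by omega
      rw [h1, traj_top n x hx1 hxn hx]
      omega
    · show (if Even j then pi1 n else pi2 n) (pio n j x) = 2 * n - x + 1 - (j + 1)
      rw [ih h (by omega),
        step_down n j (2 * n - x + 1 - j) (by omega) (by omega) (by omega)]
      omega

lemma traj_down0 (n x : ℕ) (hx1 : 2 ≤ x) (hxn : x ≤ n) (hx : x % 2 = 0) :
    ∀ j, j ≤ x - 1 → pio n j x = x - j := by
  intro j
  induction j with
  | zero => intro _; rfl
  | succ j ih =>
    intro hj
    show (if Even j then pi1 n else pi2 n) (pio n j x) = x - (j + 1)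
    rw [ih (by omega), step_down n j (x - j) (by omega) (by omega) (by omega)]
    omega

lemma traj_bot (n x : ℕ) (hx1 : 2 ≤ x) (hxn : x ≤ n) (hx : x % 2 = 0) :
    pio n x x = 1 := by
  have key : pio n ((x - 1) + 1) x = 1 := by
    show (if Even (x-1) then pi1 n else pi2 n) (pio n (x-1) x) = 1
    rw [traj_down0 n x hx1 hxn hx (x - 1) le_rfl, show x - (x - 1) = 1 by omega,
      step_bot n (x-1) (by rw [Nat.even_iff]; omega)]
  rwa [show x - 1 + 1 = x by omega] at key

lemma traj_up2 (n x : ℕ) (hx1 : 2 ≤ x) (hxn : x ≤ n) (hx : x % 2 = 0) :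
    ∀ j, x ≤ j → j ≤ n + x - 1 → pio n j x = j - x + 1 := by
  intro j
  induction j with
  | zero => omega
  | succ j ih =>
    intro hj1 hj2
    rcases Nat.lt_or_ge j x with h | h
    · have h1 : j + 1 = x := by omega
      rw [h1, traj_bot n x hx1 hxn hx]
      omega
    · show (if Even j then pi1 n else pi2 n) (pio n j x) = j + 1 - x + 1
      rw [ih h (by omega),
        step_up n j (j - x + 1) (by omega) (by omega) (by omega)]
      omega

theorem pio_fixed_once (n : ℕ) (hn : 1 ≤ n) (x : ℕ) (hx1 : 1 ≤ x) (hxn : x ≤ n) :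
    ∃! i : ℕ, i < n ∧ pio n i x = pio n (i + 1) x := by
  rcases Nat.even_or_odd x with hx | hx
  · have hx2 := Nat.even_iff.1 hx
    have hx2' : 2 ≤ x := by omega
    refine ⟨x - 1, ⟨by omega, ?_⟩, ?_⟩
    · rw [traj_down0 n x hx2' hxn hx2 (x-1) le_rfl,
        show x - 1 + 1 = x by omega, traj_bot n x hx2' hxn hx2]
      omega
    · rintro i ⟨hi, hfix⟩
      by_contra hne
      rcases Nat.lt_or_ge i (x - 1) with h | h
      · rw [traj_down0 n x hx2' hxn hx2 i (by omega),
          traj_down0 n x hx2' hxn hx2 (i+1) (by omega)] at hfix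
        omega
      · have h' : x ≤ i := by omega
        rw [traj_up2 n x hx2' hxn hx2 i h' (by omega),
          traj_up2 n x hx2' hxn hx2 (i+1) (by omega) (by omega)] at hfix
        omega
  · have hx2 := Nat.odd_iff.1 hx
    refine ⟨n - x, ⟨by omega, ?_⟩, ?_⟩
    · rw [traj_up n x hx1 hxn hx2 (n-x) le_rfl, traj_top n x hx1 hxn hx2]
      omega
    · rintro i ⟨hi, hfix⟩
      by_contra hne
      rcases Nat.lt_or_ge i (n - x) with h | h
      · rw [traj_up n x hx1 hxn hx2 i (by omega),
          traj_up n x hx1 hxn hx2 (i+1) (by omega)] at hfix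
        omega
      · have h' : n - x + 1 ≤ i := by omega
        rw [traj_down n x hx1 hxn hx2 i h' (by omega),
          traj_down n x hx1 hxn hx2 (i+1) (by omega) (by omega)] at hfix
        omega
end

section
/- Fix y₀ ∈ (−π/2, π/2). There exists a tilting rectangle with left corner (x,y₀) and right corner (x',y') if and only if x' − x > |y' − y₀|, (x' − x) + (y' − y₀) ≤ π − 2y₀, and (x' − x) − (y' − y₀) ≤ π + 2y₀. -/
open Real

theorem tilting_rectangle_right_corner_iff (y₀ : ℝ)
    (hy₀ : -(π / 2) < y₀ ∧ y₀ < π / 2) (x x' y' : ℝ) :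
    (∃ a b : ℝ, 0 < a ∧ a ≤ π / 2 - y₀ ∧ 0 < b ∧ b ≤ y₀ + π / 2 ∧
        x' = x + a + b ∧ y' = y₀ + a - b) ↔
      (x' - x > |y' - y₀| ∧ (x' - x) + (y' - y₀) ≤ π - 2 * y₀ ∧
        (x' - x) - (y' - y₀) ≤ π + 2 * y₀) := by
  constructor
  · rintro ⟨a, b, ha, ha', hb, hb', hx, hy⟩
    subst hx hy
    refine ⟨?_, by linarith, by linarith⟩
    rw [gt_iff_lt, abs_lt]
    constructor <;> · ring_nf; linarith
  · rintro ⟨h1, h2, h3⟩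
    rw [gt_iff_lt, abs_lt] at h1
    exact ⟨(x' - x + (y' - y₀)) / 2, (x' - x - (y' - y₀)) / 2,
      by linarith [h1.1, h1.2], by linarith, by linarith [h1.1, h1.2],
      by linarith, by ring, by ring⟩
end
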